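/- Let Sigma be a finite alphabet with sigma letters, $ a letter not in Sigma, and phi the morphism with phi(a) = a $^{sigma-1} for a in Sigma. Let u in Sigma^m with m >= 1, let w be a word over Sigma, let p_0 be an integer with m <= p_0, and for 1 <= i <= m-1 let u_i be a word of length sigma in which every letter of Sigma occurs exactly once and whose last letter is u[i]. Set w' = phi(w) $^{3 * p_0 * sigma} u_1 u_2 ... u_{m-1} and p = p_0 * sigma. Then u is a minimal absent p-subsequence (pMAS) of w' if and only if u is not a p_0-subsequence of w. -/

import Mathlib

open List

/-- `v` is a `p`-subsequence of `w`: there is a contiguous factor `u` of `w`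
of length at most `p` such that `v` is a subsequence of `u`. -/
def PSubseq {α : Type*} (p : ℕ) (v w : List α) : Prop :=
  ∃ u : List α, u <:+: w ∧ u.length ≤ p ∧ v <+ u

/-- `v` is a minimal absent `p`-subsequence of `w`: `v` is not a `p`-subsequence of `w`,
but every proper subsequence of `v` is a `p`-subsequence of `w`. -/
def PMAS {α : Type*} (p : ℕ) (v w : List α) : Prop :=
  ¬PSubseq p v w ∧ ∀ v' : List α, v' <+ v → v' ≠ v → PSubseq p v' w

/-- The morphism `phi(a) = a $^{σ-1}`, where words over `Σ ∪ {$}` are modelled as lists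
over `Option α` (`$` is `none`, letters of `Σ` are embedded by `some`), and `σ` is the
number of letters of `Σ`. -/
def phi {α : Type*} [Fintype α] (w : List α) : List (Option α) :=
  w.flatMap (fun a => some a :: List.replicate (Fintype.card α - 1) (none : Option α))

/-! A window of length `p₀σ` of `w'` cannot meet both `phi w` and the suffix `u_1 ⋯ u_{m-1}`,
since the run of `$` between them is longer. Inside `phi w` consecutive letters of `Σ` are `σ`
apart, so such a window carries a factor of `w` of length at most `p₀`; conversely `phi` maps a
factor of length `p₀` to one of length `p₀σ`. In the suffix, `u[i]` occurs in `u_i` only at its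
end, so embedding `u` greedily uses up one block per letter and `m - 1` blocks do not suffice;
but every word of length `< m` embeds there, its `i`-th letter in `u_i`, and the whole suffix
has length `(m-1)σ ≤ p`. -/

namespace List

variable {α : Type*}

theorem IsInfix.append_cases {x a b : List α} (h : x <:+: a ++ b) :
    x <:+: a ∨ x <:+: b ∨ ∃ x₁ x₂, x = x₁ ++ x₂ ∧ x₁ <:+ a ∧ x₂ <+: b := by
  obtain ⟨s, t, hst⟩ := h
  rw [append_assoc, append_eq_append_iff] at hst
  rcases hst with ⟨a', rfl, hxt⟩ | ⟨b', rfl, rfl⟩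
  · rcases append_eq_append_iff.mp hxt with ⟨a'', rfl, rfl⟩ | ⟨c, rfl, rfl⟩
    · exact Or.inl ⟨s, a'', by simp⟩
    · exact Or.inr (Or.inr ⟨a', c, rfl, suffix_append s a', prefix_append c t⟩)
  · exact Or.inr (Or.inl ⟨b', t, by simp⟩)

theorem IsInfix.of_append_append {x a m b : List α} (h : x <:+: a ++ m ++ b)
    (hx : x.length ≤ m.length) : x <:+: a ++ m ∨ x <:+: m ++ b := by
  rcases h.append_cases with h | h | ⟨x₁, x₂, rfl, h₁, h₂⟩
  · exact Or.inl h
  · exact Or.inr (h.trans infix_append_right)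
  · have h₁m : x₁ <:+ m :=
      suffix_of_suffix_length_le h₁ (suffix_append a m) (by simp at hx; omega)
    obtain ⟨s, rfl⟩ := h₁m
    obtain ⟨t, rfl⟩ := h₂
    exact Or.inr ⟨s, t, by simp⟩

theorem Sublist.of_cons_sublist_append_cons {c : α} {v B R : List α} (hc : c ∉ B)
    (h : c :: v <+ B ++ c :: R) : v <+ R := by
  induction B with
  | nil => exact (cons_sublist_cons.mp h)
  | cons b B ih =>
    have hcb : c ≠ b := fun e => hc (e ▸ mem_cons_self)
    rcases sublist_cons_iff.mp h with h | ⟨r, hr, -⟩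
    · exact ih (fun hm => hc (mem_cons_of_mem b hm)) h
    · exact absurd (cons.inj hr).1 hcb

theorem length_le_of_sublist_flatten {L : List (List α)} {v : List α}
    (hL : ∀ i (hv : i < v.length) (hi : i < L.length), ∃ B, L[i] = B ++ [v[i]] ∧ v[i] ∉ B)
    (h : v <+ L.flatten) : v.length ≤ L.length := by
  induction L generalizing v with
  | nil => simp [sublist_nil.mp (by simpa using h)]
  | cons l L ih =>
    cases v with
    | nil => simp
    | cons c v =>
      obtain ⟨B, hl, hc⟩ := hL 0 (by simp) (by simp)
      simp only [getElem_cons_zero] at hl hc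
      rw [flatten_cons, hl, append_assoc, singleton_append] at h
      have hlen := ih (fun i hv hi => hL (i + 1) (by simpa) (by simpa))
        (h.of_cons_sublist_append_cons hc)
      simpa using hlen

theorem sublist_flatten_of_forall_getElem_mem {L : List (List α)} {v : List α}
    (hlen : v.length ≤ L.length) (hmem : ∀ i (hv : i < v.length), v[i] ∈ L[i]) :
    v <+ L.flatten := by
  refine sublist_flatten_iff.mpr ⟨v.map ([·]), (flatMap_singleton' v).symm, fun i hi => ?_⟩
  rw [length_map] at hi
  simpa [getElem?_eq_getElem (hi.trans_le hlen)] using hmem i hi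

theorem map_some_sublist_iff {v : List α} {x : List (Option α)} :
    v.map some <+ x ↔ v <+ x.reduceOption := by
  refine ⟨fun h => by simpa [reduceOption, filterMap_map] using h.filterMap id, fun h => ?_⟩
  have hx : x.reduceOption.map some <+ x := by
    rw [reduceOption, map_filterMap_some_eq_filter_map_isSome, map_id]
    exact filter_sublist
  exact (h.map some).trans hx

theorem IsInfix.reduceOption {x z : List (Option α)} (h : x <:+: z) :
    x.reduceOption <:+: z.reduceOption :=
  h.filterMap id

theorem reduceOption_map_some (l : List α) : (l.map some).reduceOption = l := by
  simp [reduceOption, filterMap_map]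

theorem length_reduceOption_mul_le_of_infix {k N : ℕ} {w : List α} {y : List (Option α)}
    (hy : y <:+: w.flatMap (fun a => some a :: replicate k none) ++ replicate N none) :
    y.reduceOption.length * (k + 1) ≤ y.length + k := by
  induction w generalizing y with
  | nil =>
    rw [flatMap_nil, nil_append] at hy
    obtain ⟨n, -, rfl⟩ := sublist_replicate_iff.mp hy.sublist
    simp
  | cons a w ih =>
    rw [flatMap_cons, append_assoc] at hy
    rcases hy.append_cases with hy | hy | ⟨y₁, y₂, rfl, hy₁, hy₂⟩
    · have h1 : y.reduceOption.length ≤ 1 := by simpa using hy.reduceOption.length_le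
      have h2 := reduceOption_length_le y
      rcases Nat.le_one_iff_eq_zero_or_eq_one.mp h1 with h | h <;> rw [h] <;> omega
    · exact ih hy
    · have ih₂ := ih hy₂.isInfix
      rw [reduceOption_append, length_append, length_append]
      rcases suffix_cons_iff.mp hy₁ with rfl | hy₁
      · simp only [reduceOption_cons_of_some, reduceOption_replicate_none, length_cons,
          length_replicate, length_nil, zero_add, add_mul, one_mul]
        omega
      · obtain ⟨n, -, rfl⟩ := sublist_replicate_iff.mp hy₁.sublist
        rw [reduceOption_replicate_none, length_nil, zero_add]
        omega

theorem length_eq_card_of_forall_count_eq_one [Fintype α] [DecidableEq α] {l : List α}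
    (h : ∀ a, l.count a = 1) : l.length = Fintype.card α := by
  have hl : (l : Multiset α) = Finset.univ.val :=
    Multiset.ext.mpr fun a => by rw [Multiset.coe_count, h, Multiset.count_univ]
  simpa using congrArg Multiset.card hl

end List

open List

section PSubseq

variable {α : Type*} {p : ℕ} {v w : List α}

theorem PSubseq.nil (p : ℕ) (w : List α) : PSubseq p [] w :=
  ⟨[], nil_infix, Nat.zero_le p, nil_sublist _⟩

theorem PSubseq.of_sublist (hv : v <+ w) (hw : w.length ≤ p) : PSubseq p v w :=
  ⟨w, infix_refl w, hw, hv⟩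

theorem PSubseq.of_infix {w' : List α} (h : PSubseq p v w) (hw : w <:+: w') : PSubseq p v w' :=
  let ⟨x, hx, hlen, hsub⟩ := h
  ⟨x, hx.trans hw, hlen, hsub⟩

theorem PSubseq.of_append_append {a m b : List α} (h : PSubseq p v (a ++ m ++ b))
    (hp : p ≤ m.length) : PSubseq p v (a ++ m) ∨ PSubseq p v (m ++ b) :=
  let ⟨x, hx, hlen, hsub⟩ := h
  (hx.of_append_append (hlen.trans hp)).imp (⟨x, ·, hlen, hsub⟩) (⟨x, ·, hlen, hsub⟩)

theorem PSubseq.sublist_reduceOption {z : List (Option α)} (h : PSubseq p (v.map some) z) :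
    v <+ z.reduceOption :=
  let ⟨_, hx, _, hsub⟩ := h
  (map_some_sublist_iff.mp hsub).trans hx.reduceOption.sublist

end PSubseq

section Phi

variable {α : Type*} [Fintype α] {v w : List α} {n : ℕ}

theorem reduceOption_phi (w : List α) : (phi w).reduceOption = w := by
  simp [phi, reduceOption, filterMap_flatMap]

theorem length_phi [Nonempty α] (w : List α) : (phi w).length = w.length * Fintype.card α := by
  simp [phi, Nat.sub_add_cancel Fintype.card_pos]

theorem List.IsInfix.phi {f : List α} (h : f <:+: w) : phi f <:+: phi w := by
  obtain ⟨s, t, rfl⟩ := h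
  exact ⟨phi s, phi t, by simp [phi]⟩

theorem PSubseq.map_some_phi [Nonempty α] (h : PSubseq n v w) :
    PSubseq (n * Fintype.card α) (v.map some) (phi w) :=
  let ⟨f, hf, hlen, hsub⟩ := h
  ⟨phi f, hf.phi, by rw [length_phi]; exact Nat.mul_le_mul_right _ hlen,
    map_some_sublist_iff.mpr (by rwa [reduceOption_phi])⟩

theorem PSubseq.of_map_some_phi_append_replicate [Nonempty α] {N : ℕ}
    (h : PSubseq (n * Fintype.card α) (v.map some) (phi w ++ replicate N none)) :
    PSubseq n v w := by
  obtain ⟨x, hx, hlen, hsub⟩ := h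
  have hσ := Fintype.card_pos (α := α)
  have hwin := length_reduceOption_mul_le_of_infix hx
  rw [Nat.sub_add_cancel hσ] at hwin
  refine ⟨x.reduceOption, ?_, ?_, map_some_sublist_iff.mp hsub⟩
  · simpa [reduceOption_append, reduceOption_phi] using hx.reduceOption
  · have hlt : x.reduceOption.length * Fintype.card α < (n + 1) * Fintype.card α := by
      rw [add_mul, one_mul]; omega
    exact Nat.lt_succ_iff.mp (Nat.lt_of_mul_lt_mul_right hlt)

end Phi

section Blocks

variable {α : Type*} [DecidableEq α]

theorem length_flatten_ofFn_of_count_eq_one [Fintype α] {n : ℕ} {ui : Fin n → List α}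
    (hcount : ∀ i a, (ui i).count a = 1) : (ofFn ui).flatten.length = n * Fintype.card α := by
  simp [length_flatten, map_ofFn, sum_ofFn, length_eq_card_of_forall_count_eq_one (hcount _)]

theorem sublist_flatten_ofFn_of_count_eq_one {n : ℕ} {ui : Fin n → List α}
    (hcount : ∀ i a, (ui i).count a = 1) {v : List α} (hv : v.length ≤ n) :
    v <+ (ofFn ui).flatten :=
  sublist_flatten_of_forall_getElem_mem (by rwa [length_ofFn]) fun i hi => by
    rw [List.getElem_ofFn]
    exact count_pos_iff.mp (by rw [hcount]; omega)

theorem not_sublist_flatten_ofFn {u : List α} (hu : u ≠ []) {ui : Fin (u.length - 1) → List α}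
    (hcount : ∀ i a, (ui i).count a = 1)
    (hlast : ∀ i, (ui i).getLast? = some (u.get (i.castLE (Nat.sub_le u.length 1)))) :
    ¬ u <+ (ofFn ui).flatten := by
  intro h
  have hblock : ∀ i (hi : i < u.length) (hL : i < (ofFn ui).length),
      ∃ B, (ofFn ui)[i] = B ++ [u[i]] ∧ u[i] ∉ B := by
    intro i _ hL
    rw [length_ofFn] at hL
    obtain ⟨B, hB⟩ := getLast?_eq_some_iff.mp (hlast ⟨i, hL⟩)
    refine ⟨B, by simpa using hB, count_eq_zero.mp ?_⟩
    simpa [hB] using hcount ⟨i, hL⟩ u[i]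
  have hlen := length_le_of_sublist_flatten hblock h
  rw [length_ofFn] at hlen
  have := length_pos_of_ne_nil hu
  omega

end Blocks

theorem pmas_reduction_from_psubseq_match_general {α : Type*} [Fintype α] [DecidableEq α]
    (u w : List α) (p₀ : ℕ) (hp : u.length ≤ p₀)
    (ui : Fin (u.length - 1) → List α)
    (hcount : ∀ i : Fin (u.length - 1), ∀ a : α, (ui i).count a = 1)
    (hlast : ∀ i : Fin (u.length - 1),
      (ui i).getLast? = some (u.get (i.castLE (Nat.sub_le u.length 1)))) :
    PMAS (p₀ * Fintype.card α) (u.map some)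
      (phi w ++ List.replicate (3 * p₀ * Fintype.card α) (none : Option α) ++
        ((List.ofFn ui).flatten.map some)) ↔
      ¬PSubseq p₀ u w := by
  rcases eq_or_ne u [] with rfl | hu
  · exact iff_of_false (fun h => h.1 (.nil _ _)) (not_not_intro (.nil _ _))
  have : Nonempty α := ⟨u.head hu⟩
  have hgap : p₀ * Fintype.card α ≤ 3 * p₀ * Fintype.card α := by
    rw [mul_assoc]
    exact Nat.le_mul_of_pos_left _ three_pos
  constructor
  · rintro ⟨habsent, -⟩ hw
    exact habsent (hw.map_some_phi.of_infix (by rw [append_assoc]; exact infix_append_left))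
  refine fun hw => ⟨fun h => ?_, fun v' hv' hne => ?_⟩
  · rcases h.of_append_append (by rwa [length_replicate]) with h | h
    · exact hw h.of_map_some_phi_append_replicate
    · have hsub := h.sublist_reduceOption
      rw [reduceOption_append, reduceOption_replicate_none, nil_append,
        reduceOption_map_some] at hsub
      exact not_sublist_flatten_ofFn hu hcount hlast hsub
  · obtain ⟨v, hvu, rfl⟩ := sublist_map_iff.mp hv'
    have hlt : v.length < u.length :=
      lt_of_le_of_ne hvu.length_le fun h => hne (by rw [hvu.eq_of_length h])
    refine (PSubseq.of_sublist ((sublist_flatten_ofFn_of_count_eq_one hcount ?_).map some)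
      ?_).of_infix infix_append_right
    · omega
    · rw [length_map, length_flatten_ofFn_of_count_eq_one hcount]
      exact Nat.mul_le_mul_right _ (by omega)

/-- Let `u ∈ Σ^m` with `m ≥ 1`, `w` a word over `Σ`, `p₀ ≥ m`, and for `1 ≤ i ≤ m-1` let
`u_i` be a word in which every letter of `Σ` occurs exactly once (hence of length `σ`) and
whose last letter is `u[i]`. Set `w' = phi(w) $^{3 p₀ σ} u_1 u_2 ... u_{m-1}` and
`p = p₀ σ`. Then `u` is a minimal absent `p`-subsequence of `w'` iff `u` is not a
`p₀`-subsequence of `w`. -/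
theorem pmas_reduction_from_psubseq_match {α : Type*} [Fintype α] [DecidableEq α]
    (u w : List α) (p₀ : ℕ) (hm : 1 ≤ u.length) (hp : u.length ≤ p₀)
    (ui : Fin (u.length - 1) → List α)
    (hcount : ∀ i : Fin (u.length - 1), ∀ a : α, (ui i).count a = 1)
    (hlast : ∀ i : Fin (u.length - 1),
      (ui i).getLast? = some (u.get (i.castLE (Nat.sub_le u.length 1)))) :
    PMAS (p₀ * Fintype.card α) (u.map some)
      (phi w ++ List.replicate (3 * p₀ * Fintype.card α) (none : Option α) ++
        ((List.ofFn ui).flatten.map some)) ↔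
      ¬PSubseq p₀ u w :=
  pmas_reduction_from_psubseq_match_general u w p₀ hp ui hcount hlast
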